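/- arXiv:1802.00035 — 4 statements merged into one kernel-verified Lean document; each statement's English description precedes it below -/
import Mathlib

section
/- Let c ∈ ℝ \ {0} and let (c_m)_{m≥0} be the coefficient sequence of the Degasperis–Procesi conserved quantities. Then: (a) if c > 0, then c_m < 0 for every m ≥ 2; (b) if c < 0, then c_m > 0 for every even m ≥ 2 and c_m < 0 for every odd m ≥ 3. -/
/-- The coefficient sequence of the Degasperis–Procesi conserved quantities:
`c₀ = −1/(3c)`, `c₁ = −2/(9ct)`, `c_{m+2} = −t⁻² c_m + 3 t⁻¹ c_{m+1}`,
where `t` is the real cube root of `c`. -/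
noncomputable def cseq (c t : ℝ) : ℕ → ℝ
  | 0 => -1 / (3 * c)
  | 1 => -2 / (9 * c * t)
  | n + 2 => -(t ^ 2)⁻¹ * cseq c t n + 3 * t⁻¹ * cseq c t (n + 1)

lemma cseq_pos_case (c t : ℝ) (ht : t ^ 3 = c) (hc : 0 < c) :
    ∀ m : ℕ, 1 ≤ m → cseq c t m < 0 := by
  have ht0 : 0 < t := by nlinarith [sq_nonneg t, sq_nonneg (t - 1), sq_nonneg (t + 1)]
  have key : ∀ n : ℕ, cseq c t (n + 1) < 0 ∧
      cseq c t (n + 2) ≤ cseq c t (n + 1) / (2 * t) := by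
    intro n
    induction n with
    | zero =>
      have h1 : cseq c t 1 = -2 / (9 * t ^ 4) := by
        show -2 / (9 * c * t) = _
        rw [← ht]; ring_nf
      have h2 : cseq c t 2 = -1 / (3 * t ^ 5) := by
        show -(t ^ 2)⁻¹ * (-1 / (3 * c)) + 3 * t⁻¹ * (-2 / (9 * c * t)) = _
        rw [← ht]
        field_simp
        ring
      constructor
      · rw [h1]
        have : 0 < t ^ 4 := by positivity
        exact div_neg_of_neg_of_pos (by norm_num) (by linarith)
      · rw [h1, h2, div_div]
        have h5 : 0 < t ^ 5 := by positivity
        rw [div_le_div_iff₀ (by linarith) (by positivity)]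
        nlinarith [pow_pos ht0 5, pow_pos ht0 4]
    | succ n ih =>
      obtain ⟨ih1, ih2⟩ := ih
      have hb : cseq c t (n + 2) < 0 := by
        have : cseq c t (n + 1) / (2 * t) < 0 := div_neg_of_neg_of_pos ih1 (by linarith)
        linarith
      refine ⟨hb, ?_⟩
      have hrec : cseq c t (n + 3) =
          -(t ^ 2)⁻¹ * cseq c t (n + 1) + 3 * t⁻¹ * cseq c t (n + 2) := rfl
      rw [hrec]
      have tne : t ≠ 0 := ne_of_gt ht0
      rw [le_div_iff₀ (by linarith : (0:ℝ) < 2 * t)] at ih2 ⊢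
      have e : (-(t ^ 2)⁻¹ * cseq c t (n + 1) + 3 * t⁻¹ * cseq c t (n + 2)) * (2 * t)
          = -2 * (t⁻¹ * cseq c t (n + 1)) + 6 * cseq c t (n + 2) := by
        field_simp
        ring
      have h4 : t⁻¹ * (cseq c t (n + 2) * (2 * t)) ≤ t⁻¹ * cseq c t (n + 1) :=
        mul_le_mul_of_nonneg_left ih2 (by positivity)
      have h5 : t⁻¹ * (cseq c t (n + 2) * (2 * t)) = 2 * cseq c t (n + 2) := by
        field_simp
      rw [e]
      linarith
  intro m hm
  obtain ⟨n, rfl⟩ := Nat.exists_eq_add_of_le hm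
  rw [Nat.add_comm]
  exact (key n).1

lemma cseq_flip (c t : ℝ) : ∀ m : ℕ, cseq (-c) (-t) m = (-1) ^ (m + 1) * cseq c t m := by
  have key : ∀ m : ℕ, cseq (-c) (-t) m = (-1) ^ (m + 1) * cseq c t m ∧
      cseq (-c) (-t) (m + 1) = (-1) ^ (m + 2) * cseq c t (m + 1) := by
    intro m
    induction m with
    | zero =>
      constructor
      · show -1 / (3 * -c) = (-1) ^ 1 * (-1 / (3 * c))
        rcases eq_or_ne c 0 with h | h
        · simp [h]
        · field_simp
      · show -2 / (9 * -c * -t) = (-1) ^ 2 * (-2 / (9 * c * t))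
        ring_nf
    | succ n ih =>
      obtain ⟨ih1, ih2⟩ := ih
      refine ⟨ih2, ?_⟩
      show -((-t) ^ 2)⁻¹ * cseq (-c) (-t) n + 3 * (-t)⁻¹ * cseq (-c) (-t) (n + 1)
        = (-1) ^ (n + 3) * (-(t ^ 2)⁻¹ * cseq c t n + 3 * t⁻¹ * cseq c t (n + 1))
      rw [ih1, ih2]
      have h1 : ((-t) ^ 2)⁻¹ = (t ^ 2)⁻¹ := by rw [neg_pow]; simp
      have h2 : (-t)⁻¹ = -t⁻¹ := by rw [inv_neg]
      rw [h1, h2]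
      ring
  exact fun m => (key m).1

/-- Signs of the coefficients `c_m` for `m ≥ 2`:
(a) if `c > 0` then `c_m < 0` for every `m ≥ 2`;
(b) if `c < 0` then `c_m > 0` for every even `m ≥ 2` and `c_m < 0` for every odd `m ≥ 3`. -/
theorem stmt10 (c t : ℝ) (hc : c ≠ 0) (ht : t ^ 3 = c) :
    (0 < c → ∀ m : ℕ, 2 ≤ m → cseq c t m < 0) ∧
      (c < 0 → ∀ m : ℕ, 2 ≤ m →
        (Even m → 0 < cseq c t m) ∧ (Odd m → cseq c t m < 0)) := by
  constructor
  · intro hc0 m hm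
    exact cseq_pos_case c t ht hc0 m (by omega)
  · intro hc0 m hm
    have ht' : (-t) ^ 3 = -c := by rw [← ht]; ring
    have hneg : cseq (-c) (-t) m < 0 :=
      cseq_pos_case (-c) (-t) ht' (by linarith) m (by omega)
    have hflip : cseq c t m = (-1) ^ (m + 1) * cseq (-c) (-t) m := by
      simpa using cseq_flip (-c) (-t) m
    constructor
    · intro hev
      rw [hflip]
      have : (-1 : ℝ) ^ (m + 1) = -1 := Odd.neg_one_pow (by simpa using hev.add_one)
      rw [this]; linarith
    · intro hodd
      rw [hflip]
      have : (-1 : ℝ) ^ (m + 1) = 1 := Even.neg_one_pow (by simpa using hodd.add_one)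
      rw [this]; linarith
end

section
/- Let c ∈ ℝ \ {0}, let (c_m)_{m≥0} be the coefficient sequence of the Degasperis–Procesi conserved quantities, and set c* := ((3+√5)/2)³. If 0 < |c| < c*, then |c_m| → +∞ as m → ∞; if |c| > c*, then |c_m| → 0 as m → ∞. -/
open Filter Topology Real goldenRatio

theorem eq_add_geom_of_recurrence {R : Type*} [CommRing R] {x : ℕ → R} {r s A B : R}
    (h0 : x 0 = A + B) (h1 : x 1 = A * r + B * s)
    (hrec : ∀ n, x (n + 2) = (r + s) * x (n + 1) - r * s * x n) (n : ℕ) :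
    x n = A * r ^ n + B * s ^ n := by
  induction n using Nat.twoStepInduction with
  | zero => simpa using h0
  | one => simpa using h1
  | more n ih0 ih1 => rw [hrec, ih0, ih1]; ring

theorem tendsto_abs_add_geom_atTop {A B p q : ℝ} (hA : A ≠ 0) (hqp : |q| < |p|) (hp : 1 < |p|) :
    Tendsto (fun m : ℕ => |A * p ^ m + B * q ^ m|) atTop atTop := by
  have hp0 : p ≠ 0 := abs_pos.mp (one_pos.trans hp)
  have hratio : |q / p| < 1 := by rwa [abs_div, div_lt_one (one_pos.trans hp)]
  have hlim : Tendsto (fun m : ℕ => |A + B * (q / p) ^ m|) atTop (𝓝 |A|) := by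
    simpa using (((tendsto_pow_atTop_nhds_zero_of_abs_lt_one hratio).const_mul B).const_add A).abs
  refine ((tendsto_pow_atTop_atTop_of_one_lt hp).atTop_mul_pos (abs_pos.mpr hA) hlim).congr
    fun m => ?_
  rw [← abs_pow, ← abs_mul, mul_add, div_pow]
  field_simp

theorem tendsto_add_geom_nhds_zero {A B p q : ℝ} (hp : |p| < 1) (hq : |q| < 1) :
    Tendsto (fun m : ℕ => A * p ^ m + B * q ^ m) atTop (𝓝 0) := by
  simpa using ((tendsto_pow_atTop_nhds_zero_of_abs_lt_one hp).const_mul A).add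
    ((tendsto_pow_atTop_nhds_zero_of_abs_lt_one hq).const_mul B)

theorem goldenRatio_sq_eq : φ ^ 2 = (3 + √5) / 2 := by
  rw [goldenRatio_sq]; ring

theorem goldenRatio_sq_add_goldenConj_sq : φ ^ 2 + ψ ^ 2 = 3 := by
  rw [goldenRatio_sq, goldenConj_sq, add_add_add_comm, goldenRatio_add_goldenConj]; norm_num

theorem goldenRatio_sq_mul_goldenConj_sq : φ ^ 2 * ψ ^ 2 = 1 := by
  rw [← mul_pow, goldenRatio_mul_goldenConj]; norm_num

theorem goldenConj_sq_lt_goldenRatio_sq : ψ ^ 2 < φ ^ 2 := by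
  rw [goldenRatio_sq, goldenConj_sq]
  linarith [goldenConj_neg, goldenRatio_pos]

theorem cseq_eq_add_geom (c t : ℝ) (m : ℕ) :
    cseq c t m = -ψ ^ 2 / (9 * c) * (φ ^ 2 / t) ^ m + -φ ^ 2 / (9 * c) * (ψ ^ 2 / t) ^ m := by
  have hsum := goldenRatio_sq_add_goldenConj_sq
  have hprod := goldenRatio_sq_mul_goldenConj_sq
  refine eq_add_geom_of_recurrence ?_ ?_ (fun n => ?_) m
  · show -1 / (3 * c) = _
    linear_combination (9 * c)⁻¹ * hsum
  · show -2 / (9 * c * t) = _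
    linear_combination (2 * (9 * c * t)⁻¹) * hprod
  · show -(t ^ 2)⁻¹ * cseq c t n + 3 * t⁻¹ * cseq c t (n + 1) = _
    linear_combination (-t⁻¹ * cseq c t (n + 1)) * hsum + ((t ^ 2)⁻¹ * cseq c t n) * hprod

/-- Asymptotics of the coefficients: with `c* = ((3+√5)/2)³`,
if `0 < |c| < c*` then `|c_m| → +∞`, while if `|c| > c*` then `|c_m| → 0`. -/
theorem stmt11 (c t : ℝ) (hc : c ≠ 0) (ht : t ^ 3 = c) :
    (|c| < ((3 + Real.sqrt 5) / 2) ^ 3 →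
      Filter.Tendsto (fun m : ℕ => |cseq c t m|) Filter.atTop Filter.atTop) ∧
    (((3 + Real.sqrt 5) / 2) ^ 3 < |c| →
      Filter.Tendsto (fun m : ℕ => |cseq c t m|) Filter.atTop (nhds 0)) := by
  have ht0 : 0 < |t| := abs_pos.mpr (by rintro rfl; exact hc (by simp [← ht]))
  have habs {a : ℝ} (ha : 0 ≤ a) : |a / t| = a / |t| := by rw [abs_div, abs_of_nonneg ha]
  have hψφ := goldenConj_sq_lt_goldenRatio_sq
  simp_rw [cseq_eq_add_geom, ← goldenRatio_sq_eq, ← ht, abs_pow]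
  refine ⟨fun hlt => ?_, fun hgt => ?_⟩
  · have htφ : |t| < φ ^ 2 := lt_of_pow_lt_pow_left₀ 3 (by positivity) hlt
    refine tendsto_abs_add_geom_atTop ?_ ?_ ?_
    · have h9c : 9 * t ^ 3 ≠ 0 := by simpa [← ht] using hc
      exact div_ne_zero (neg_ne_zero.mpr (pow_ne_zero 2 goldenConj_ne_zero)) h9c
    · rw [habs (sq_nonneg _), habs (sq_nonneg _)]
      exact div_lt_div_of_pos_right hψφ ht0
    · rwa [habs (sq_nonneg _), one_lt_div ht0]
  · have hφt : φ ^ 2 < |t| := lt_of_pow_lt_pow_left₀ 3 (abs_nonneg t) hgt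
    simpa only [abs_zero] using (tendsto_add_geom_nhds_zero
      (by rwa [habs (sq_nonneg _), div_lt_one ht0])
      (by rw [habs (sq_nonneg _), div_lt_one ht0]; exact hψφ.trans hφt)).abs
end

section
/- Let c ∈ ℝ \ {0}. For every odd integer n ≥ 1, the alternating sum S_n = Σ_{k=0}^{n+1} (−1)^{(n+1)/2 − k} c_k c_{n+1−k} is nonzero. -/
/-- For odd `n`, the alternating sum `S_n = Σ_{k=0}^{n+1} (−1)^{(n+1)/2−k} c_k c_{n+1−k}`. -/
noncomputable def Sseq (c t : ℝ) (n : ℕ) : ℝ :=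
  ∑ k ∈ Finset.range (n + 2),
    (-1 : ℝ) ^ ((((n : ℤ) + 1) / 2) - (k : ℤ)) * cseq c t k * cseq c t (n + 1 - k)

noncomputable def fseq : ℕ → ℝ
  | 0 => 3
  | 1 => 2
  | n + 2 => 3 * fseq (n + 1) - fseq n

noncomputable def W (m : ℕ) : ℝ :=
  ∑ k ∈ Finset.range (m + 1), (-1 : ℝ) ^ k * fseq k * fseq (m - k)

lemma fseq_pos : ∀ m, 2 ≤ fseq m ∧ 2 ≤ fseq (m + 1) ∧ fseq m ≤ fseq (m + 1) + 1 := by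
  intro m
  induction m with
  | zero => norm_num [fseq]
  | succ n ih =>
    obtain ⟨h1, h2, h3⟩ := ih
    have he : fseq (n + 2) = 3 * fseq (n + 1) - fseq n := rfl
    refine ⟨h2, by rw [he]; linarith, by rw [he]; linarith⟩

lemma Wrec (m : ℕ) :
    W (m + 2) = 3 * W (m + 1) - W m + (-1 : ℝ) ^ m * (7 * fseq (m + 1) + 3 * fseq (m + 2)) := by
  have h1 : ∀ k ∈ Finset.range (m + 1),
      (-1 : ℝ) ^ k * fseq k * fseq (m + 2 - k)
        = 3 * ((-1 : ℝ) ^ k * fseq k * fseq (m + 1 - k)) - (-1 : ℝ) ^ k * fseq k * fseq (m - k) := by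
    intro k hk
    have hk' : k ≤ m := Nat.lt_succ_iff.mp (Finset.mem_range.mp hk)
    have e2 : m + 2 - k = (m - k) + 2 := by omega
    have e1 : m + 1 - k = (m - k) + 1 := by omega
    rw [e2, e1, show fseq (m - k + 2) = 3 * fseq (m - k + 1) - fseq (m - k) from rfl]
    ring
  have ea : m + 2 - (m + 1) = 1 := by omega
  have eb : m + 2 - (m + 2) = 0 := by omega
  have ec : m + 1 - (m + 1) = 0 := by omega
  have expand2 : W (m + 2)
      = (∑ k ∈ Finset.range (m + 1), (-1 : ℝ) ^ k * fseq k * fseq (m + 2 - k))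
        + (-1 : ℝ) ^ (m + 1) * fseq (m + 1) * fseq 1
        + (-1 : ℝ) ^ (m + 2) * fseq (m + 2) * fseq 0 := by
    rw [W, Finset.sum_range_succ, Finset.sum_range_succ, ea, eb]
  have expand0 : W (m + 1) = (∑ k ∈ Finset.range (m + 1), (-1 : ℝ) ^ k * fseq k * fseq (m + 1 - k))
        + (-1 : ℝ) ^ (m + 1) * fseq (m + 1) * fseq 0 := by
    rw [W, Finset.sum_range_succ, ec]
  have expand1 : (∑ k ∈ Finset.range (m + 1), (-1 : ℝ) ^ k * fseq k * fseq (m + 1 - k))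
      = W (m + 1) - (-1 : ℝ) ^ (m + 1) * fseq (m + 1) * fseq 0 := by
    rw [expand0]; ring
  have hWm : W m = ∑ k ∈ Finset.range (m + 1), (-1 : ℝ) ^ k * fseq k * fseq (m - k) := rfl
  rw [expand2, Finset.sum_congr rfl h1, Finset.sum_sub_distrib, ← Finset.mul_sum, expand1, ← hWm,
    show fseq 0 = 3 from rfl, show fseq 1 = 2 from rfl, pow_succ, pow_succ]
  ring

lemma Wkey : ∀ j : ℕ, W (2 * j + 1) = 0 ∧ 3 * W (2 * j + 2) = 7 * fseq (2 * j + 2) + 3 * fseq (2 * j + 3) := by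
  intro j
  induction j with
  | zero =>
    constructor
    · show W 1 = 0
      norm_num [W, Finset.sum_range_succ, fseq]
    · show 3 * W 2 = 7 * fseq 2 + 3 * fseq 3
      have h2 : fseq 2 = 3 := by norm_num [fseq]
      have h3 : fseq 3 = 7 := by norm_num [fseq, h2]
      simp [W, Finset.sum_range_succ, fseq]
      norm_num [h2, h3]
  | succ n ih =>
    obtain ⟨ih1, ih2⟩ := ih
    have r1 := Wrec (2 * n + 1)
    have r2 := Wrec (2 * n + 2)
    have p1 : (-1 : ℝ) ^ (2 * n + 1) = -1 := Odd.neg_one_pow ⟨n, by ring⟩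
    have p2 : (-1 : ℝ) ^ (2 * n + 2) = 1 := Even.neg_one_pow ⟨n + 1, by ring⟩
    rw [p1] at r1
    rw [p2] at r2
    have frec : fseq (2 * n + 4) = 3 * fseq (2 * n + 3) - fseq (2 * n + 2) := rfl
    have frec5 : fseq (2 * n + 5) = 3 * fseq (2 * n + 4) - fseq (2 * n + 3) := rfl
    have e1 : 2 * (n + 1) + 1 = 2 * n + 3 := by ring
    have e2 : 2 * (n + 1) + 2 = 2 * n + 4 := by ring
    have e3 : 2 * (n + 1) + 3 = 2 * n + 5 := by ring
    rw [e1, e2, e3]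
    constructor
    · -- W (2n+3) = 0
      have : (2 * n + 1) + 2 = 2 * n + 3 := by ring
      rw [this] at r1
      linarith [r1, ih1, ih2]
    · have : (2 * n + 2) + 2 = 2 * n + 4 := by ring
      rw [this] at r2
      have r1' : W (2 * n + 3) = 0 := by
        have : (2 * n + 1) + 2 = 2 * n + 3 := by ring
        rw [this] at r1
        linarith [ih1, ih2]
      rw [frec5]
      linarith [r2, r1', ih2]

lemma cseq_eq (c t : ℝ) (hc : c ≠ 0) (ht : t ≠ 0) : ∀ m, cseq c t m = -fseq m / (9 * c * t ^ m)
  | 0 => by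
    show -1 / (3 * c) = -fseq 0 / (9 * c * t ^ 0)
    rw [show fseq 0 = 3 from rfl]
    field_simp
    ring
  | 1 => by
    show -2 / (9 * c * t) = -fseq 1 / (9 * c * t ^ 1)
    rw [show fseq 1 = 2 from rfl, pow_one]
  | (m + 2) => by
    rw [show cseq c t (m + 2) = -(t ^ 2)⁻¹ * cseq c t m + 3 * t⁻¹ * cseq c t (m + 1) from rfl,
      cseq_eq c t hc ht m, cseq_eq c t hc ht (m + 1),
      show fseq (m + 2) = 3 * fseq (m + 1) - fseq m from rfl]
    field_simp
    ring


/-- For every odd `n ≥ 1`, the alternating sum `S_n` is nonzero. -/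
theorem stmt13 (c t : ℝ) (hc : c ≠ 0) (ht : t ^ 3 = c) (n : ℕ) (hn : Odd n) (hn1 : 1 ≤ n) :
    Sseq c t n ≠ 0 := by
  have htne : t ≠ 0 := by
    intro h; rw [h] at ht; simp at ht; exact hc ht.symm
  obtain ⟨l, hl⟩ := hn
  subst hl
  -- exponent simplification
  have hexp : (((2 * l + 1 : ℕ) : ℤ) + 1) / 2 = (l : ℤ) + 1 := by
    push_cast
    omega
  have key : Sseq c t (2 * l + 1)
      = (-1 : ℝ) ^ (l + 1) * (81 * c ^ 2 * t ^ (2 * l + 2))⁻¹ * W (2 * l + 2) := by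
    rw [Sseq, W, Finset.mul_sum]
    apply Finset.sum_congr (congrArg Finset.range (by omega))
    intro k hk
    have hk' : k ≤ 2 * l + 1 + 1 := Nat.lt_succ_iff.mp (Finset.mem_range.mp hk)
    have hz : (-1 : ℝ) ^ ((((2 * l + 1 : ℕ) : ℤ) + 1) / 2 - (k : ℤ))
        = (-1 : ℝ) ^ (l + 1) * (-1 : ℝ) ^ k := by
      rw [hexp, zpow_sub₀ (by norm_num : (-1 : ℝ) ≠ 0)]
      rw [show ((l : ℤ) + 1) = ((l + 1 : ℕ) : ℤ) by push_cast; ring, zpow_natCast, zpow_natCast]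
      rw [div_eq_mul_inv, ← inv_pow, inv_neg_one]
    have hpow : t ^ k * t ^ (2 * l + 1 + 1 - k) = t ^ (2 * l + 2) := by
      rw [← pow_add]
      congr 1
      omega
    rw [hz, cseq_eq c t hc htne k, cseq_eq c t hc htne (2 * l + 1 + 1 - k),
      show (2 * l + 1 + 1 - k) = 2 * l + 2 - k from by omega]
    rw [show (2 * l + 1 + 1 - k) = 2 * l + 2 - k from by omega] at hpow
    field_simp
    rw [← hpow]
    ring
  rw [key]
  have hW := (Wkey l).2
  obtain ⟨hf2, -, -⟩ := fseq_pos (2 * l + 2)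
  obtain ⟨hf3, -, -⟩ := fseq_pos (2 * l + 3)
  have hWpos : 0 < W (2 * l + 2) := by linarith
  have h1 : (-1 : ℝ) ^ (l + 1) ≠ 0 := by
    intro h
    have := pow_eq_zero_iff (n := l + 1) (by omega) |>.mp h
    norm_num at this
  have h2 : (81 * c ^ 2 * t ^ (2 * l + 2))⁻¹ ≠ 0 := by
    apply inv_ne_zero
    positivity
  exact mul_ne_zero (mul_ne_zero h1 h2) (ne_of_gt hWpos)
end

section
/- Let c ∈ ℝ \ {0}. For every integer l ≥ 0, writing n = 4l+3, one has Σ_{s=0}^{l} ( c_{2s} c_{n+1−2s} − c_{2s+1} c_{n−2s} ) = (d₁ d₂/(a+b)) · (b^{2l+3} − a^{2l+3}) · (b^{2l+2} − a^{2l+2}). -/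
noncomputable def aDP (t : ℝ) : ℝ := (3 + Real.sqrt 5) / (2 * t)
noncomputable def bDP (t : ℝ) : ℝ := (3 - Real.sqrt 5) / (2 * t)
noncomputable def d1DP (c : ℝ) : ℝ := -(3 + Real.sqrt 5) / (18 * c)
noncomputable def d2DP (c : ℝ) : ℝ := (-3 + Real.sqrt 5) / (18 * c)

/-!
Since `a` and `b` are the roots of `x² = 3t⁻¹x − t⁻²`, the sequence has the Binet form
`c_m = d₂aᵐ + d₁bᵐ` (not `d₁aᵐ + d₂bᵐ`, as the case `m = 1` shows). For any such sequence
`c_i c_{j+1} − c_{i+1} c_j = d₁d₂(a − b)(bⁱaʲ − aⁱbʲ)`. Summed over `i = 2s`, `j = 4l + 3 − 2s`,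
the bracket factors as `(a^{2l+3} − b^{2l+3}) G` with the homogeneous geometric sum
`G = Σ_{s ≤ l} b^{2s} a^{2(l−s)}`, and `G (b² − a²) = b^{2l+2} − a^{2l+2}`; the factor
`1/(a + b)` comes from `a − b = (a² − b²)/(a + b)`.
-/

section BinetSequence

open Finset

variable {K : Type*} [Field K] {p q a b : K} {u : ℕ → K}

lemma sub_mul_sub_eq_of_eq_add_pow (hu : ∀ m, u m = p * a ^ m + q * b ^ m) (i j : ℕ) :
    u i * u (j + 1) - u (i + 1) * u j = p * q * (a - b) * (b ^ i * a ^ j - a ^ i * b ^ j) := by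
  simp only [hu]
  ring

lemma sum_range_pow_mul_pow_sub (a b : K) (k l : ℕ) :
    ∑ s ∈ range (l + 1),
        (b ^ (2 * s) * a ^ (2 * l + k - 2 * s) - a ^ (2 * s) * b ^ (2 * l + k - 2 * s)) =
      (a ^ k - b ^ k) * ∑ s ∈ range (l + 1), (b ^ 2) ^ s * (a ^ 2) ^ (l - s) := by
  have hflip := geom_sum₂_comm (b ^ 2) (a ^ 2) (l + 1)
  simp only [Nat.add_sub_cancel] at hflip
  rw [sub_mul, mul_sum, hflip, mul_sum, ← sum_sub_distrib]
  refine sum_congr rfl fun s hs => ?_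
  have hsl : 2 * l + k - 2 * s = k + 2 * (l - s) := by
    have := mem_range_succ_iff.mp hs
    omega
  rw [hsl]
  ring

theorem sum_range_casoratian_eq (hu : ∀ m, u m = p * a ^ m + q * b ^ m) (hab : a + b ≠ 0)
    (l : ℕ) :
    ∑ s ∈ range (l + 1),
        (u (2 * s) * u (4 * l + 4 - 2 * s) - u (2 * s + 1) * u (4 * l + 3 - 2 * s)) =
      p * q / (a + b) * (b ^ (2 * l + 3) - a ^ (2 * l + 3)) *
        (b ^ (2 * l + 2) - a ^ (2 * l + 2)) := by
  have hterm : ∀ s ∈ range (l + 1),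
      u (2 * s) * u (4 * l + 4 - 2 * s) - u (2 * s + 1) * u (4 * l + 3 - 2 * s) =
        p * q * (a - b) *
          (b ^ (2 * s) * a ^ (4 * l + 3 - 2 * s) - a ^ (2 * s) * b ^ (4 * l + 3 - 2 * s)) := by
    intro s hs
    have hsl := mem_range_succ_iff.mp hs
    rw [show 4 * l + 4 - 2 * s = 4 * l + 3 - 2 * s + 1 by omega]
    exact sub_mul_sub_eq_of_eq_add_pow hu _ _
  have hgeom := geom_sum₂_mul (b ^ 2) (a ^ 2) (l + 1)
  rw [Nat.add_sub_cancel, ← pow_mul, ← pow_mul, show 2 * (l + 1) = 2 * l + 2 by ring] at hgeom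
  rw [sum_congr rfl hterm, ← mul_sum, show 4 * l + 3 = 2 * l + (2 * l + 3) by ring,
    sum_range_pow_mul_pow_sub, ← hgeom]
  field_simp
  ring

end BinetSequence

lemma aDP_add_bDP (t : ℝ) : aDP t + bDP t = 3 / t := by
  unfold aDP bDP
  ring

lemma cseq_eq_s14 (c t : ℝ) (m : ℕ) : cseq c t m = d2DP c * aDP t ^ m + d1DP c * bDP t ^ m := by
  have h5 : Real.sqrt 5 ^ 2 = 5 := Real.sq_sqrt (by norm_num)
  have haDP : aDP t ^ 2 = -(t ^ 2)⁻¹ + 3 * t⁻¹ * aDP t := by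
    unfold aDP
    linear_combination (t⁻¹ ^ 2 / 4) * h5
  have hbDP : bDP t ^ 2 = -(t ^ 2)⁻¹ + 3 * t⁻¹ * bDP t := by
    unfold bDP
    linear_combination (t⁻¹ ^ 2 / 4) * h5
  induction m using Nat.twoStepInduction with
  | zero =>
    simp only [cseq, d1DP, d2DP]
    ring
  | one =>
    simp only [cseq, d1DP, d2DP, aDP, bDP]
    linear_combination (-(c⁻¹ * t⁻¹) / 18) * h5
  | more m ih₀ ih₁ =>
    rw [cseq, ih₀, ih₁]
    linear_combination (-(d2DP c * aDP t ^ m)) * haDP - (d1DP c * bDP t ^ m) * hbDP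

/-- For every `l ≥ 0`, with `n = 4l+3`,
`Σ_{s=0}^{l} (c_{2s} c_{n+1−2s} − c_{2s+1} c_{n−2s})
  = (d₁d₂/(a+b)) (b^{2l+3} − a^{2l+3}) (b^{2l+2} − a^{2l+2})`. -/
theorem stmt14 (c t : ℝ) (hc : c ≠ 0) (ht : t ^ 3 = c) (l : ℕ) :
    ∑ s ∈ Finset.range (l + 1),
        (cseq c t (2 * s) * cseq c t (4 * l + 4 - 2 * s) -
          cseq c t (2 * s + 1) * cseq c t (4 * l + 3 - 2 * s)) =
      (d1DP c * d2DP c / (aDP t + bDP t)) *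
        (bDP t ^ (2 * l + 3) - aDP t ^ (2 * l + 3)) *
        (bDP t ^ (2 * l + 2) - aDP t ^ (2 * l + 2)) := by
  have ht₀ : t ≠ 0 := by
    rintro rfl
    exact hc (by simpa using ht.symm)
  rw [mul_comm (d1DP c)]
  exact sum_range_casoratian_eq (cseq_eq_s14 c t) (by rw [aDP_add_bDP]; positivity) l
end
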